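/- For every nonempty open subset U of H(ω*), there exists a family of 𝔠 many pairwise disjoint nonempty open subsets of H(ω*) each contained in U; hence the cellularity and density of every nonempty open subspace of H(ω*) equal 𝔠. -/

import Mathlib

open Set Topology TopologicalSpace

/-- The compact-open topology on the group of self-homeomorphisms of a space:
the topology induced from the compact-open topology on `C(X, X)`. -/
instance homeomorphCompactOpen (X : Type*) [TopologicalSpace X] :
    TopologicalSpace (X ≃ₜ X) :=
  TopologicalSpace.induced (fun h : X ≃ₜ X => (h : C(X, X))) ContinuousMap.compactOpen

/-- The group of self-homeomorphisms of a space, under composition. -/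
instance homeomorphGroup (X : Type*) [TopologicalSpace X] : Group (X ≃ₜ X) where
  mul f g := g.trans f
  one := Homeomorph.refl X
  inv := Homeomorph.symm
  mul_assoc _ _ _ := Homeomorph.ext fun _ => rfl
  one_mul _ := Homeomorph.ext fun _ => rfl
  mul_one _ := Homeomorph.ext fun _ => rfl
  inv_mul_cancel f := Homeomorph.ext fun x => f.symm_apply_apply x

/-- The weight of a topological space: the least cardinality of a base of its topology. -/
noncomputable def TopologicalSpace.weight (X : Type u) [TopologicalSpace X] : Cardinal.{u} :=
  ⨅ B : {B : Set (Set X) // TopologicalSpace.IsTopologicalBasis B}, Cardinal.mk B.1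

/-- A set is an Fσ-set if it is a countable union of closed sets. -/
def IsFsigma {X : Type*} [TopologicalSpace X] (s : Set X) : Prop :=
  ∃ F : ℕ → Set X, (∀ n, IsClosed (F n)) ∧ s = ⋃ n, F n

/-- An F-space (for normal spaces): disjoint open Fσ-sets have disjoint closures. -/
def IsFSpace (X : Type*) [TopologicalSpace X] : Prop :=
  ∀ U V : Set X, IsOpen U → IsOpen V → IsFsigma U → IsFsigma V → Disjoint U V →
    Disjoint (closure U) (closure V)

/-- A Parovičenko space: a compact zero-dimensional F-space of weight `𝔠` in which
every nonempty Gδ-set has infinite interior. -/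
structure IsParovicenko (X : Type u) [TopologicalSpace X] : Prop where
  compact : CompactSpace X
  t2 : T2Space X
  zeroDim : TopologicalSpace.IsTopologicalBasis {s : Set X | IsClopen s}
  fSpace : IsFSpace X
  weight_eq : TopologicalSpace.weight X = Cardinal.continuum
  gdelta_int : ∀ s : Set X, IsGδ s → s.Nonempty → (interior s).Infinite

/-- The Gδ-modification of a topology: the topology generated by the Gδ-sets. -/
def gdeltaMod {X : Type*} (t : TopologicalSpace X) : TopologicalSpace X :=
  TopologicalSpace.generateFrom {s : Set X | @IsGδ X t s}

/-- The Čech–Stone remainder `βα \ α` of a space `α`. -/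
abbrev CechStoneRemainder (α : Type u) [TopologicalSpace α] : Type u :=
  {p : StoneCech α // p ∉ Set.range (stoneCechUnit : α → StoneCech α)}

/-- `ω* = βω \ ω`, the Čech–Stone remainder of the countable discrete space `ω`. -/
abbrev OmegaStar : Type := CechStoneRemainder ℕ

/-!
A neighbourhood of `h₀` in `H(ω*)` constrains `h₀` only on finitely many compact sets, so it
contains `h₀` followed by any homeomorphism supported in a small clopen set `B*`. Split `B` into
infinite sets `C` and `C'`, take an almost disjoint family `(T x)` of `𝔠` infinite subsets of `C'`
and permutations `σ x` of `B` carrying `C` onto `T x`. The open sets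
`{h ∈ U | h (h₀⁻¹ C*) ⊆ (T x)*}` are then nonempty and pairwise disjoint, since
`(T x)* ∩ (T y)* = (T x ∩ T y)* = ∅`; any dense subset of `U` meets each of them.

Conversely, the sets `{h | h (A*) ⊆ B*}` for finitely many pairs `A, B ⊆ ℕ` form a base of
`H(ω*)` of size `𝔠`, which bounds both the cellularity and the density by `𝔠`.
-/

open Cardinal

section CardinalBounds

variable {X : Type*} [TopologicalSpace X]

theorem Set.PairwiseDisjoint.cardinal_mk_le_of_subset_closure {𝓥 : Set (Set X)}
    (hdisj : 𝓥.PairwiseDisjoint id) {D : Set X}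
    (h𝓥 : ∀ V ∈ 𝓥, IsOpen V ∧ V.Nonempty ∧ V ⊆ closure D) : #𝓥 ≤ #D := by
  have hmeet : ∀ V : 𝓥, ∃ d : D, (d : X) ∈ (V : Set X) := fun V => by
    obtain ⟨hVo, hVne, hVD⟩ := h𝓥 V V.2
    obtain ⟨d, hdD, hdV⟩ := (closure_inter_open_nonempty_iff hVo).1
      (by rwa [inter_eq_right.2 hVD])
    exact ⟨⟨d, hdD⟩, hdV⟩
  choose pick hpick using hmeet
  refine mk_le_of_injective (f := pick) fun V W hVW => Subtype.ext ?_
  by_contra hne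
  exact Set.disjoint_left.1 (hdisj V.2 W.2 hne) (hpick V) (hVW ▸ hpick W)

theorem TopologicalSpace.IsTopologicalBasis.exists_subset_closure_cardinal_mk_le
    {𝓑 : Set (Set X)} (h𝓑 : IsTopologicalBasis 𝓑) (U : Set X) :
    ∃ D ⊆ U, U ⊆ closure D ∧ #D ≤ #𝓑 := by
  let 𝓑U := {b ∈ 𝓑 | (b ∩ U).Nonempty}
  let pick : 𝓑U → X := fun b => b.2.2.some
  refine ⟨range pick, range_subset_iff.2 fun b => b.2.2.some_mem.2, fun x hx => ?_,
    mk_range_le.trans (mk_le_mk_of_subset (sep_subset _ _))⟩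
  refine h𝓑.mem_closure_iff.2 fun b hb hxb => ⟨pick ⟨b, hb, x, hxb, hx⟩, ?_, mem_range_self _⟩
  exact (Set.Nonempty.some_mem (s := b ∩ U) _).1

end CardinalBounds

section CompactOpen

variable {X Y : Type*} [TopologicalSpace X] [TopologicalSpace Y]

theorem TopologicalSpace.IsTopologicalBasis.exists_between_of_isCompact {ι : Type*}
    {b : ι → Set X} (hb : IsTopologicalBasis (range b)) (hempty : ∃ i, b i = ∅)
    (hunion : ∀ i j, ∃ k, b k = b i ∪ b j) {K W : Set X} (hK : IsCompact K) (hW : IsOpen W)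
    (hKW : K ⊆ W) : ∃ i, K ⊆ b i ∧ b i ⊆ W := by
  refine hK.induction_on (p := fun s => ∃ i, s ⊆ b i ∧ b i ⊆ W) ?_ ?_ ?_ ?_
  · obtain ⟨i, hi⟩ := hempty
    exact ⟨i, empty_subset _, hi ▸ empty_subset _⟩
  · rintro s t hst ⟨i, hti, hiW⟩
    exact ⟨i, hst.trans hti, hiW⟩
  · rintro s t ⟨i, hsi, hiW⟩ ⟨j, htj, hjW⟩
    obtain ⟨k, hk⟩ := hunion i j
    exact ⟨k, hk ▸ union_subset_union hsi htj, hk ▸ union_subset hiW hjW⟩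
  · intro x hx
    obtain ⟨_, ⟨i, rfl⟩, hxi, hiW⟩ := hb.exists_subset_of_mem_open (hKW hx) hW
    exact ⟨b i, mem_nhdsWithin_of_mem_nhds ((hb.isOpen ⟨i, rfl⟩).mem_nhds hxi), i, le_rfl, hiW⟩

theorem ContinuousMap.isTopologicalBasis_setOf_forall_mapsTo {ι κ : Type*}
    (bX : ι → Set X) (bY : κ → Set Y) (hbX : ∀ i, IsCompact (bX i)) (hbY : ∀ j, IsOpen (bY j))
    (hX : ∀ K W, IsCompact K → IsOpen W → K ⊆ W → ∃ i, K ⊆ bX i ∧ bX i ⊆ W)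
    (hY : ∀ K W, IsCompact K → IsOpen W → K ⊆ W → ∃ j, K ⊆ bY j ∧ bY j ⊆ W) :
    IsTopologicalBasis
      (range fun s : Finset (ι × κ) => {f : C(X, Y) | ∀ p ∈ s, MapsTo f (bX p.1) (bY p.2)}) := by
  classical
  refine isTopologicalBasis_of_isOpen_of_nhds ?_ fun f O hfO hO => ?_
  · rintro _ ⟨s, rfl⟩
    simp only [ofPred_forall]
    exact isOpen_biInter_finset fun p _ => isOpen_setOfPred_mapsTo (hbX _) (hbY _)
  obtain ⟨S, hSf, hS, hSO⟩ := ContinuousMap.mem_nhds_iff.1 (hO.mem_nhds hfO)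
  have hrefine : ∀ KW : S, ∃ ij : ι × κ,
      KW.1.1 ⊆ bX ij.1 ∧ MapsTo f (bX ij.1) (bY ij.2) ∧ bY ij.2 ⊆ KW.1.2 := by
    rintro ⟨⟨K, W⟩, hKW⟩
    obtain ⟨hK, hW, hfKW⟩ := hS K W hKW
    obtain ⟨i, hKi, hiW⟩ := hX K (f ⁻¹' W) hK (hW.preimage f.continuous) hfKW.subset_preimage
    obtain ⟨j, hij, hjW⟩ := hY (f '' bX i) W ((hbX i).image f.continuous) hW
      (image_subset_iff.2 hiW)
    exact ⟨(i, j), hKi, mapsTo_iff_image_subset.2 hij, hjW⟩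
  choose ij hKij hfij hijW using hrefine
  have := hSf.fintype
  refine ⟨_, ⟨Finset.univ.image ij, rfl⟩, ?_, fun g hg => hSO fun K W hKW => ?_⟩
  · simp only [Finset.mem_image, Finset.mem_univ, true_and, forall_exists_index,
      forall_apply_eq_imp_iff, mem_ofPred_eq]
    exact hfij
  · exact (hg (ij ⟨(K, W), hKW⟩) (Finset.mem_image_of_mem _ (Finset.mem_univ _))).mono
      (hKij ⟨(K, W), hKW⟩) (hijW ⟨(K, W), hKW⟩)

end CompactOpen

section Homeomorph

variable {X : Type*} [TopologicalSpace X]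

theorem isTopologicalBasis_homeomorph_setOf_forall_mapsTo {ι : Type*} (b : ι → Set X)
    (hbc : ∀ i, IsCompact (b i)) (hbo : ∀ i, IsOpen (b i))
    (hb : ∀ K W, IsCompact K → IsOpen W → K ⊆ W → ∃ i, K ⊆ b i ∧ b i ⊆ W) :
    IsTopologicalBasis
      (range fun s : Finset (ι × ι) => {h : X ≃ₜ X | ∀ p ∈ s, MapsTo h (b p.1) (b p.2)}) := by
  have := (ContinuousMap.isTopologicalBasis_setOf_forall_mapsTo b b hbc hbo hb hb).induced
    (fun h : X ≃ₜ X => (h : C(X, X)))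
  rwa [← range_comp] at this

theorem isOpen_homeomorph_setOf_mapsTo {K W : Set X} (hK : IsCompact K) (hW : IsOpen W) :
    IsOpen {h : X ≃ₜ X | MapsTo h K W} :=
  isOpen_induced (ContinuousMap.isOpen_setOfPred_mapsTo hK hW)

theorem exists_isOpen_forall_trans_mem [T2Space X] {U : Set (X ≃ₜ X)} (hU : IsOpen U)
    {h₀ : X ≃ₜ X} (h₀U : h₀ ∈ U) (q : X) :
    ∃ Ω : Set X, IsOpen Ω ∧ q ∈ Ω ∧ ∀ g : X ≃ₜ X, (∀ y ∉ Ω, g y = y) → h₀.trans g ∈ U := by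
  classical
  obtain ⟨O, hO, rfl⟩ := isOpen_induced_iff.1 hU
  obtain ⟨S, hSf, hS, hSO⟩ := ContinuousMap.mem_nhds_iff.1 (hO.mem_nhds h₀U)
  -- For each `(K, W)`, either `Ω ⊆ W` or `Ω` misses `h₀ '' K`; as a homeomorphism fixing `Ωᶜ`
  -- pointwise maps `Ω` into itself, it keeps `h₀ '' K` inside `W`.
  let Ω := ⋂ KW ∈ S, if q ∈ h₀ '' KW.1 then KW.2 else (h₀ '' KW.1)ᶜ
  refine ⟨Ω, hSf.isOpen_biInter fun ⟨K, W⟩ hKW => ?_, mem_iInter₂.2 fun ⟨K, W⟩ hKW => ?_,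
    fun g hg => hSO fun K W hKW y hy => ?_⟩
  · obtain ⟨hK, hW, -⟩ := hS K W hKW
    split_ifs
    exacts [hW, ((hK.image h₀.continuous).isClosed).isOpen_compl]
  · split_ifs with hq
    · obtain ⟨z, hz, rfl⟩ := hq
      exact (hS K W hKW).2.2 hz
    · exact hq
  have hΩ := fun x (hx : x ∈ Ω) => mem_iInter₂.1 hx (K, W) hKW
  show g (h₀ y) ∈ W
  by_cases hyΩ : h₀ y ∈ Ω
  · have hq : q ∈ h₀ '' K := by
      by_contra hq
      have := hΩ _ hyΩ
      simp only [if_neg hq] at this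
      exact this ⟨y, hy, rfl⟩
    have hgyΩ : g (h₀ y) ∈ Ω := by
      by_contra hgy
      rw [g.injective (hg _ hgy)] at hgy
      exact hgy hyΩ
    simpa only [if_pos hq] using hΩ _ hgyΩ
  · rw [hg _ hyΩ]
    exact (hS K W hKW).2.2 hy

end Homeomorph

section Combinatorics

variable {α : Type*}

theorem exists_perm_image_eq [Countable α] {B C T : Set α} (hCB : C ⊆ B) (hTB : T ⊆ B)
    (hC : C.Infinite) (hT : T.Infinite) (hBC : (B \ C).Infinite) (hBT : (B \ T).Infinite) :
    ∃ σ : Equiv.Perm α, (∀ a ∉ B, σ a = a) ∧ σ '' C = T := by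
  classical
  have equiv_of_infinite : ∀ {S S' : Set α}, S.Infinite → S'.Infinite → Nonempty (S ≃ S') := by
    intro S S' hS hS'
    have := hS.to_subtype
    have := hS'.to_subtype
    exact Cardinal.eq.1 ((mk_eq_aleph0 S).trans (mk_eq_aleph0 S').symm)
  obtain ⟨e₁⟩ := equiv_of_infinite hC hT
  obtain ⟨e₂⟩ := equiv_of_infinite hBC hBT
  let τ : Equiv.Perm B := (Equiv.Set.sumDiffSubset hCB).symm.trans
    ((e₁.sumCongr e₂).trans (Equiv.Set.sumDiffSubset hTB))
  have hτC : ∀ c (hc : c ∈ C), Equiv.Perm.ofSubtype τ c = e₁ ⟨c, hc⟩ := by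
    intro c hc
    rw [Equiv.Perm.ofSubtype_apply_of_mem τ (hCB hc)]
    simp [τ, Equiv.Set.sumDiffSubset_symm_apply_of_mem hCB (x := ⟨c, hCB hc⟩) hc]
  refine ⟨Equiv.Perm.ofSubtype τ, fun a ha => Equiv.Perm.ofSubtype_apply_of_not_mem τ ha, ?_⟩
  ext t
  constructor
  · rintro ⟨c, hc, rfl⟩
    exact hτC c hc ▸ (e₁ ⟨c, hc⟩).2
  · intro ht
    exact ⟨e₁.symm ⟨t, ht⟩, (e₁.symm ⟨t, ht⟩).2, by simp [hτC _ (e₁.symm ⟨t, ht⟩).2]⟩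

/-- The branch through the binary tree of finite `Bool`-lists determined by `x ⊆ ℕ`. -/
def branch (x : Set ℕ) : Set (List Bool) :=
  range fun n => (List.range n).map x.boolIndicator

theorem branch_infinite (x : Set ℕ) : (branch x).Infinite :=
  infinite_range_of_injective fun n m h => by simpa using congrArg List.length h

theorem finite_branch_inter_branch {x y : Set ℕ} (hxy : x ≠ y) :
    (branch x ∩ branch y).Finite := by
  obtain ⟨k, hk⟩ : ∃ k, ¬(k ∈ x ↔ k ∈ y) := by
    by_contra! h
    exact hxy (Set.ext h)
  refine ((finite_Iic k).image fun n => (List.range n).map x.boolIndicator).subset ?_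
  rintro _ ⟨⟨n, rfl⟩, m, hm⟩
  obtain rfl : m = n := by simpa using congrArg List.length hm
  refine ⟨m, mem_Iic.2 (not_lt.1 fun hkm => hk ?_), rfl⟩
  rw [mem_iff_boolIndicator, mem_iff_boolIndicator,
    List.map_inj_left.1 hm k (List.mem_range.2 hkm)]

theorem Set.Infinite.exists_almostDisjoint_family {S : Set α} (hS : S.Infinite) :
    ∃ T : Set ℕ → Set α, (∀ x, T x ⊆ S ∧ (T x).Infinite) ∧
      Pairwise fun x y => (T x ∩ T y).Finite := by
  let e : List Bool → α := fun p => Set.Infinite.natEmbedding S hS (Encodable.encode p)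
  have he : Function.Injective e := Subtype.val_injective.comp
    ((Set.Infinite.natEmbedding S hS).injective.comp Encodable.encode_injective)
  refine ⟨fun x => e '' branch x, fun x => ⟨?_, (branch_infinite x).image he.injOn⟩,
    fun x y hxy => ?_⟩
  · rintro _ ⟨p, -, rfl⟩
    exact (Set.Infinite.natEmbedding S hS _).2
  · simp only [← image_inter he]
    exact (finite_branch_inter_branch hxy).image e

end Combinatorics

instance StoneCech.instExtremallyDisconnected {α : Type*} [TopologicalSpace α]
    [DiscreteTopology α] : ExtremallyDisconnected (StoneCech α) :=
  StoneCech.projective.extremallyDisconnected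

section NatStoneCech

def natClopen (A : Set ℕ) : Set (StoneCech ℕ) := closure (stoneCechUnit '' A)

theorem natClopen_eq_preimage (A : Set ℕ) :
    natClopen A =
      stoneCechExtend (continuous_of_discreteTopology (f := A.boolIndicator)) ⁻¹' {true} := by
  have hunit : ∀ n, stoneCechExtend (continuous_of_discreteTopology (f := A.boolIndicator))
      (stoneCechUnit n) = true ↔ n ∈ A := fun n => by
    rw [stoneCechExtend_stoneCechUnit, mem_iff_boolIndicator]
  refine Subset.antisymm (closure_minimal ?_ ((isClosed_discrete _).preimage
    (continuous_stoneCechExtend _))) ((Dense.open_subset_closure_inter denseRange_stoneCechUnit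
      ((isOpen_discrete _).preimage (continuous_stoneCechExtend _))).trans (closure_mono ?_))
  · rintro _ ⟨n, hn, rfl⟩
    exact (hunit n).2 hn
  · rintro _ ⟨hx, n, rfl⟩
    exact ⟨n, (hunit n).1 hx, rfl⟩

theorem isClopen_natClopen (A : Set ℕ) : IsClopen (natClopen A) := by
  rw [natClopen_eq_preimage]
  exact (isClopen_discrete _).preimage (continuous_stoneCechExtend _)

theorem preimage_stoneCechUnit_natClopen (A : Set ℕ) : stoneCechUnit ⁻¹' natClopen A = A := by
  ext n
  rw [natClopen_eq_preimage, mem_preimage, mem_preimage, stoneCechExtend_stoneCechUnit,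
    mem_singleton_iff, ← mem_iff_boolIndicator]

theorem natClopen_preimage_stoneCechUnit {C : Set (StoneCech ℕ)} (hC : IsClopen C) :
    natClopen (stoneCechUnit ⁻¹' C) = C := by
  refine Subset.antisymm (closure_minimal (image_preimage_subset _ _) hC.isClosed) ?_
  rw [natClopen, image_preimage_eq_inter_range]
  exact Dense.open_subset_closure_inter denseRange_stoneCechUnit hC.isOpen

theorem isTopologicalBasis_range_natClopen : IsTopologicalBasis (range natClopen) := by
  convert isTopologicalBasis_isClopen (X := StoneCech ℕ)
  exact Subset.antisymm (range_subset_iff.2 isClopen_natClopen)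
    fun C hC => ⟨_, natClopen_preimage_stoneCechUnit hC⟩

theorem natClopen_inter (A B : Set ℕ) : natClopen (A ∩ B) = natClopen A ∩ natClopen B := by
  rw [← natClopen_preimage_stoneCechUnit ((isClopen_natClopen A).inter (isClopen_natClopen B)),
    preimage_inter, preimage_stoneCechUnit_natClopen, preimage_stoneCechUnit_natClopen]

theorem natClopen_compl (A : Set ℕ) : natClopen Aᶜ = (natClopen A)ᶜ := by
  rw [← natClopen_preimage_stoneCechUnit (isClopen_natClopen A).compl, preimage_compl,
    preimage_stoneCechUnit_natClopen]

theorem natClopen_of_finite {A : Set ℕ} (hA : A.Finite) : natClopen A = stoneCechUnit '' A :=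
  (hA.image _).isClosed.closure_eq

theorem isOpen_range_stoneCechUnit : IsOpen (range (stoneCechUnit : ℕ → StoneCech ℕ)) := by
  rw [range_eq_iUnion]
  refine isOpen_iUnion fun n => ?_
  rw [← image_singleton, ← natClopen_of_finite (finite_singleton n)]
  exact (isClopen_natClopen _).isOpen

noncomputable def natPermHomeomorph (σ : Equiv.Perm ℕ) : StoneCech ℕ ≃ₜ StoneCech ℕ where
  toFun := stoneCechExtend (continuous_of_discreteTopology (f := stoneCechUnit ∘ σ))
  invFun := stoneCechExtend (continuous_of_discreteTopology (f := stoneCechUnit ∘ σ.symm))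
  left_inv := congrFun <| stoneCech_hom_ext
    ((continuous_stoneCechExtend _).comp (continuous_stoneCechExtend _)) continuous_id <|
    funext fun n => by simp [stoneCechExtend_stoneCechUnit]
  right_inv := congrFun <| stoneCech_hom_ext
    ((continuous_stoneCechExtend _).comp (continuous_stoneCechExtend _)) continuous_id <|
    funext fun n => by simp [stoneCechExtend_stoneCechUnit]
  continuous_toFun := continuous_stoneCechExtend _
  continuous_invFun := continuous_stoneCechExtend _

variable (σ : Equiv.Perm ℕ)

theorem natPermHomeomorph_stoneCechUnit (n : ℕ) :
    natPermHomeomorph σ (stoneCechUnit n) = stoneCechUnit (σ n) :=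
  stoneCechExtend_stoneCechUnit continuous_of_discreteTopology n

theorem natPermHomeomorph_symm_stoneCechUnit (n : ℕ) :
    (natPermHomeomorph σ).symm (stoneCechUnit n) = stoneCechUnit (σ.symm n) :=
  stoneCechExtend_stoneCechUnit continuous_of_discreteTopology n

theorem natPermHomeomorph_mem_range_iff {x : StoneCech ℕ} :
    natPermHomeomorph σ x ∈ range stoneCechUnit ↔ x ∈ range stoneCechUnit := by
  constructor
  · rintro ⟨n, hn⟩
    refine ⟨σ.symm n, ?_⟩
    rw [← natPermHomeomorph_symm_stoneCechUnit, hn, Homeomorph.symm_apply_apply]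
  · rintro ⟨n, rfl⟩
    exact ⟨σ n, (natPermHomeomorph_stoneCechUnit σ n).symm⟩

theorem preimage_natPermHomeomorph_natClopen (A : Set ℕ) :
    natPermHomeomorph σ ⁻¹' natClopen A = natClopen (σ ⁻¹' A) := by
  rw [← natClopen_preimage_stoneCechUnit
    ((isClopen_natClopen A).preimage (natPermHomeomorph σ).continuous)]
  congr 1
  ext n
  rw [mem_preimage, mem_preimage, natPermHomeomorph_stoneCechUnit, ← mem_preimage,
    preimage_stoneCechUnit_natClopen, mem_preimage]

theorem eqOn_natPermHomeomorph {B : Set ℕ} (hσ : ∀ n ∉ B, σ n = n) :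
    EqOn (natPermHomeomorph σ) id (natClopen Bᶜ) := by
  refine EqOn.closure ?_ (natPermHomeomorph σ).continuous continuous_id
  rintro _ ⟨n, hn, rfl⟩
  rw [natPermHomeomorph_stoneCechUnit, hσ n hn, id]

end NatStoneCech

namespace OmegaStar

instance : CompactSpace OmegaStar :=
  isCompact_iff_compactSpace.1 isOpen_range_stoneCechUnit.isClosed_compl.isCompact

/-- The clopen subset `A* = Ā \ ℕ` of `ω*`. -/
def clopen (A : Set ℕ) : Set OmegaStar := Subtype.val ⁻¹' natClopen A

theorem isClopen_clopen (A : Set ℕ) : IsClopen (clopen A) :=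
  (isClopen_natClopen A).preimage continuous_subtype_val

theorem isCompact_clopen (A : Set ℕ) : IsCompact (clopen A) :=
  (isClopen_clopen A).isClosed.isCompact

theorem clopen_union (A B : Set ℕ) : clopen (A ∪ B) = clopen A ∪ clopen B := by
  rw [clopen, natClopen, image_union, closure_union, preimage_union]
  rfl

theorem clopen_inter (A B : Set ℕ) : clopen (A ∩ B) = clopen A ∩ clopen B := by
  rw [clopen, natClopen_inter, preimage_inter]
  rfl

theorem clopen_eq_empty_of_finite {A : Set ℕ} (hA : A.Finite) : clopen A = ∅ := by
  refine eq_empty_iff_forall_notMem.2 fun x hx => x.2 ?_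
  obtain ⟨n, -, hn⟩ : x.1 ∈ stoneCechUnit '' A := natClopen_of_finite hA ▸ hx
  exact ⟨n, hn⟩

theorem clopen_nonempty_iff {A : Set ℕ} : (clopen A).Nonempty ↔ A.Infinite := by
  refine ⟨fun h hA => h.ne_empty (clopen_eq_empty_of_finite hA), fun hA => ?_⟩
  by_contra hempty
  have hsub : natClopen A ⊆ range stoneCechUnit := fun x hx => by
    by_contra hx'
    exact hempty ⟨⟨x, hx'⟩, hx⟩
  have himage := image_preimage_eq_of_subset hsub
  rw [preimage_stoneCechUnit_natClopen] at himage
  -- Otherwise `Ā = stoneCechUnit '' A` is compact and discrete, hence finite.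
  have hdiscrete : IsDiscrete (stoneCechUnit '' A) :=
    (isDiscrete_iff_discreteTopology.2 inferInstance).image isInducing_stoneCechUnit
  have hcompact : IsCompact (stoneCechUnit '' A) :=
    himage ▸ (isClopen_natClopen A).isClosed.isCompact
  exact hA ((hcompact.finite hdiscrete).of_finite_image injective_stoneCechUnit_of_t35Space.injOn)

instance : Nonempty OmegaStar :=
  ⟨(clopen_nonempty_iff.2 infinite_univ).some⟩

theorem isTopologicalBasis_range_clopen : IsTopologicalBasis (range clopen) := by
  have := isTopologicalBasis_range_natClopen.isInducing
    (Topology.IsInducing.subtypeVal (t := (range stoneCechUnit)ᶜ))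
  rwa [← range_comp] at this

theorem exists_clopen_between {K W : Set OmegaStar} (hK : IsCompact K) (hW : IsOpen W)
    (hKW : K ⊆ W) : ∃ A, K ⊆ clopen A ∧ clopen A ⊆ W :=
  isTopologicalBasis_range_clopen.exists_between_of_isCompact
    ⟨∅, clopen_eq_empty_of_finite finite_empty⟩ (fun A B => ⟨A ∪ B, clopen_union A B⟩) hK hW hKW

theorem exists_isTopologicalBasis_homeomorph_cardinal_mk_le :
    ∃ 𝓑 : Set (Set (OmegaStar ≃ₜ OmegaStar)), IsTopologicalBasis 𝓑 ∧ #𝓑 ≤ 𝔠 :=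
  ⟨_, isTopologicalBasis_homeomorph_setOf_forall_mapsTo clopen isCompact_clopen
    (fun A => (isClopen_clopen A).isOpen) fun _ _ => exists_clopen_between,
    mk_range_le.trans_eq (by rw [mk_finset_of_infinite, mk_prod, lift_id, mk_set_nat,
      continuum_mul_self])⟩

noncomputable def permHomeomorph (σ : Equiv.Perm ℕ) : OmegaStar ≃ₜ OmegaStar :=
  (natPermHomeomorph σ).subtype fun _ => not_congr (natPermHomeomorph_mem_range_iff σ).symm

theorem mapsTo_permHomeomorph_clopen (σ : Equiv.Perm ℕ) (C : Set ℕ) :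
    MapsTo (permHomeomorph σ) (clopen C) (clopen (σ '' C)) := fun x hx => by
  show natPermHomeomorph σ x.1 ∈ natClopen (σ '' C)
  rwa [← mem_preimage, preimage_natPermHomeomorph_natClopen, Equiv.preimage_image]

theorem permHomeomorph_apply_of_notMem {σ : Equiv.Perm ℕ} {B : Set ℕ} (hσ : ∀ n ∉ B, σ n = n)
    {x : OmegaStar} (hx : x ∉ clopen B) : permHomeomorph σ x = x :=
  Subtype.ext <| eqOn_natPermHomeomorph σ hσ <| by rw [natClopen_compl]; exact hx

theorem exists_pairwise_disjoint_isOpen_subset {U : Set (OmegaStar ≃ₜ OmegaStar)}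
    (hU : IsOpen U) (hne : U.Nonempty) :
    ∃ V : Set ℕ → Set (OmegaStar ≃ₜ OmegaStar),
      (∀ x, IsOpen (V x) ∧ (V x).Nonempty ∧ V x ⊆ U) ∧
        Pairwise fun x y => Disjoint (V x) (V y) := by
  obtain ⟨h₀, h₀U⟩ := hne
  obtain ⟨Ω, hΩ, hqΩ, hΩU⟩ := exists_isOpen_forall_trans_mem hU h₀U (Classical.arbitrary _)
  obtain ⟨_, ⟨B, rfl⟩, hqB, hBΩ⟩ :=
    isTopologicalBasis_range_clopen.exists_subset_of_mem_open hqΩ hΩ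
  obtain ⟨C, C', rfl, hCC', hcard⟩ :=
    (clopen_nonempty_iff.1 ⟨_, hqB⟩).exists_union_disjoint_cardinal_eq_of_infinite
  have hfin : C.Finite ↔ C'.Finite := by
    rw [← lt_aleph0_iff_set_finite, ← lt_aleph0_iff_set_finite, hcard]
  have hC : C.Infinite := fun h => clopen_nonempty_iff.1 ⟨_, hqB⟩ (h.union (hfin.1 h))
  have hC' : C'.Infinite := fun h => hC (hfin.2 h)
  obtain ⟨T, hT, hTad⟩ := hC'.exists_almostDisjoint_family
  -- Each `h₀.trans (permHomeomorph (σ x))` lies in `U` and sends `h₀⁻¹ C*` into `(T x)*`.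
  have hperm : ∀ x, ∃ σ : Equiv.Perm ℕ, (∀ n ∉ C ∪ C', σ n = n) ∧ σ '' C = T x := fun x =>
    exists_perm_image_eq subset_union_left ((hT x).1.trans subset_union_right) hC (hT x).2
      (hC'.mono fun n hn => ⟨Or.inr hn, fun hnC => disjoint_left.1 hCC' hnC hn⟩)
      (hC.mono fun n hn => ⟨Or.inl hn, fun hnT => disjoint_left.1 hCC' hn ((hT x).1 hnT)⟩)
  choose σ hσfix hσC using hperm
  let K := h₀ ⁻¹' clopen C
  obtain ⟨p, hp⟩ : K.Nonempty := (clopen_nonempty_iff.2 hC).preimage h₀.surjective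
  refine ⟨fun x => U ∩ {h | MapsTo h K (clopen (T x))}, fun x => ⟨?_, ?_, inter_subset_left⟩,
    fun x y hxy => disjoint_left.2 fun h ⟨_, hx⟩ ⟨_, hy⟩ => ?_⟩
  · exact hU.inter (isOpen_homeomorph_setOf_mapsTo (h₀.isCompact_preimage.2 (isCompact_clopen C))
      (isClopen_clopen _).isOpen)
  · refine ⟨h₀.trans (permHomeomorph (σ x)), ?_, ?_⟩
    · exact hΩU _ fun z hz => permHomeomorph_apply_of_notMem (hσfix x) fun hzB => hz (hBΩ hzB)
    · exact hσC x ▸ (mapsTo_permHomeomorph_clopen (σ x) C).comp (mapsTo_preimage h₀ _)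
  · have hpxy : h p ∈ clopen (T x ∩ T y) := (clopen_inter _ _).symm ▸ ⟨hx hp, hy hp⟩
    rwa [clopen_eq_empty_of_finite (hTad hxy)] at hpxy

end OmegaStar

/-- Every nonempty open subset `U` of `H(ω*)` contains `𝔠` many
pairwise disjoint nonempty open subsets; hence the cellularity and the density of every
nonempty open subspace of `H(ω*)` equal `𝔠`. -/
theorem cellularity_density_homeoOmegaStar
    (U : Set (OmegaStar ≃ₜ OmegaStar)) (hU : IsOpen U) (hne : U.Nonempty) :
    (∃ 𝓥 : Set (Set (OmegaStar ≃ₜ OmegaStar)),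
      Cardinal.mk 𝓥 = Cardinal.continuum ∧
      (∀ V ∈ 𝓥, IsOpen V ∧ V.Nonempty ∧ V ⊆ U) ∧ 𝓥.PairwiseDisjoint id) ∧
    (∀ 𝓥 : Set (Set (OmegaStar ≃ₜ OmegaStar)),
      (∀ V ∈ 𝓥, IsOpen V ∧ V.Nonempty ∧ V ⊆ U) → 𝓥.PairwiseDisjoint id →
      Cardinal.mk 𝓥 ≤ Cardinal.continuum) ∧
    (∀ D : Set (OmegaStar ≃ₜ OmegaStar), D ⊆ U → U ⊆ closure D →
      Cardinal.continuum ≤ Cardinal.mk D) ∧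
    (∃ D : Set (OmegaStar ≃ₜ OmegaStar), D ⊆ U ∧ U ⊆ closure D ∧
      Cardinal.mk D = Cardinal.continuum) := by
  obtain ⟨V, hV, hVdisj⟩ := OmegaStar.exists_pairwise_disjoint_isOpen_subset hU hne
  have hVinj : Function.Injective V := Function.injective_iff_pairwise_ne.2
    fun x y hxy => (hVdisj hxy).ne (hV x).2.1.ne_empty
  have hrange : (range V).PairwiseDisjoint id := hVdisj.range_pairwise
  have density_ge : ∀ D, U ⊆ closure D → 𝔠 ≤ #D := fun D hUD => by
    rw [← mk_set_nat, ← mk_range_eq V hVinj]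
    exact hrange.cardinal_mk_le_of_subset_closure
      (forall_mem_range.2 fun x => ⟨(hV x).1, (hV x).2.1, (hV x).2.2.trans hUD⟩)
  obtain ⟨𝓑, h𝓑, h𝓑c⟩ := OmegaStar.exists_isTopologicalBasis_homeomorph_cardinal_mk_le
  obtain ⟨D, hDU, hUD, hD⟩ := h𝓑.exists_subset_closure_cardinal_mk_le U
  refine ⟨⟨range V, by rw [mk_range_eq V hVinj, mk_set_nat], forall_mem_range.2 hV, hrange⟩,
    fun 𝓥 h𝓥 h𝓥disj => ?_, fun D _ hUD => density_ge D hUD,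
    ⟨D, hDU, hUD, (hD.trans h𝓑c).antisymm (density_ge D hUD)⟩⟩
  exact (h𝓥disj.cardinal_mk_le_of_subset_closure
    fun W hW => ⟨(h𝓥 W hW).1, (h𝓥 W hW).2.1, (h𝓥 W hW).2.2.trans hUD⟩).trans (hD.trans h𝓑c)
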